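/- There exists a bijection φ from S_f to O_f such that for every subgraph K ∈ S_f, the directed subgraph φ(K) is an orientation of G admitting a d-flow and A(φ(K)) = A(K); that is, the bijection preserves the w-min-cost d-flow. -/

import Mathlib

open Finset

section Defs

variable {V : Type*}

/-- Reversal of a directed edge. -/
def drev (e : V × V) : V × V := (e.2, e.1)

/-- `K` is a subgraph of the (symmetric) edge set `E`: it contains either both or
neither of `e` and `drev e` for every `e ∈ E`. -/
def IsSubgraph [DecidableEq V] (E K : Finset (V × V)) : Prop :=
  K ⊆ E ∧ ∀ e ∈ E, (e ∈ K ↔ drev e ∈ K)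

/-- `L` is an orientation of the (symmetric) edge set `E`: it contains exactly one of
`e` and `drev e` for every `e ∈ E`. -/
def IsOrientation [DecidableEq V] (E L : Finset (V × V)) : Prop :=
  L ⊆ E ∧ ∀ e ∈ E, (e ∈ L ↔ drev e ∉ L)

variable [Fintype V] [DecidableEq V]

/-- `f` is a `d`-flow on the directed subgraph `D` of the graph with edge set `E`. -/
def IsFlow (E D : Finset (V × V)) (d : V → ℤ) (f : V × V → ℝ) : Prop :=
  (∀ e ∈ E, 0 ≤ f e ∧ f e ≤ 1) ∧
  (∀ e, e ∉ D → f e = 0) ∧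
  ∀ u : V,
    ((Finset.univ.filter (fun v : V => (u, v) ∈ E)).sum fun v => f (u, v)) -
      ((Finset.univ.filter (fun v : V => (v, u) ∈ E)).sum fun v => f (v, u)) = (d u : ℝ)

/-- A `d`-flow exists on `D`. -/
def AdmitsFlow (E D : Finset (V × V)) (d : V → ℤ) : Prop :=
  ∃ f : V × V → ℝ, IsFlow E D d f

/-- The `w`-cost of a flow `f`. -/
def flowCost (E : Finset (V × V)) (w : V × V → ℝ) (f : V × V → ℝ) : ℝ :=
  ∑ e ∈ E, w e * f e

/-- `f` is a min-cost `d`-flow on `D`. -/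
def IsMinCostFlow (E D : Finset (V × V)) (d : V → ℤ) (w : V × V → ℝ)
    (f : V × V → ℝ) : Prop :=
  IsFlow E D d f ∧ ∀ g : V × V → ℝ, IsFlow E D d g → flowCost E w f ≤ flowCost E w g

/-- The `{0,1}`-valued function determined by a set of edges. -/
def ind (S : Finset (V × V)) : V × V → ℝ := fun e => if e ∈ S then 1 else 0

/-- `A` assigns to every flow-admitting `D ⊆ E` the (edge set of the) unique,
`{0,1}`-valued min-cost `d`-flow on `D`. -/
def GoodA (E : Finset (V × V)) (d : V → ℤ) (w : V × V → ℝ)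
    (A : Finset (V × V) → Finset (V × V)) : Prop :=
  ∀ D : Finset (V × V), D ⊆ E → AdmitsFlow E D d →
    IsMinCostFlow E D d w (ind (A D)) ∧
    ∀ f : V × V → ℝ, IsMinCostFlow E D d w f → f = ind (A D)

/-- `A(D) = A(D')`: both `D` and `D'` admit a `d`-flow and their unique min-cost
`d`-flows coincide.  (If one of them admits no `d`-flow this is false.) -/
def AEq (E : Finset (V × V)) (d : V → ℤ) (A : Finset (V × V) → Finset (V × V))
    (D D' : Finset (V × V)) : Prop :=
  AdmitsFlow E D d ∧ AdmitsFlow E D' d ∧ A D = A D'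

/-- `D ⊕ e := (D ∪ {e}) \ {drev e}`. -/
def oplus (D : Finset (V × V)) (e : V × V) : Finset (V × V) := insert e D \ {drev e}

/-- `D + e := D ∪ {e, drev e}`. -/
def padd (D : Finset (V × V)) (e : V × V) : Finset (V × V) := D ∪ {e, drev e}

/-- `D − e := D \ {e, drev e}`. -/
def psub (D : Finset (V × V)) (e : V × V) : Finset (V × V) := D \ {e, drev e}

/-- The representative of `{e, drev e}` lying in the reference orientation `E'`. -/
def chi (E' : Finset (V × V)) (e : V × V) : V × V := if e ∈ E' then e else drev e

/-- The map `φ_e`. -/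
noncomputable def phiE (E : Finset (V × V)) (d : V → ℤ)
    (A : Finset (V × V) → Finset (V × V)) (E' : Finset (V × V))
    (e : V × V) (D : Finset (V × V)) : Finset (V × V) := by
  classical
  exact
    if ¬ AEq E d A D (oplus D e) then oplus D (drev e)
    else if ¬ AEq E d A D (oplus D (drev e)) then oplus D e
    else if e ∈ D then oplus D (chi E' e) else oplus D (drev (chi E' e))

/-- The map `ψ_e`. -/
noncomputable def psiE (E : Finset (V × V)) (d : V → ℤ)
    (A : Finset (V × V) → Finset (V × V)) (E' : Finset (V × V))
    (e : V × V) (D : Finset (V × V)) : Finset (V × V) := by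
  classical
  exact
    if ¬ AEq E d A D (padd D e) then psub D e
    else if ¬ AEq E d A D (psub D e) then padd D e
    else if chi E' e ∈ D then padd D e else psub D e

end Defs

/-!
Call `D ⊆ E` a hybrid for a symmetric `S ⊆ E` if it is an orientation on the pairs in `S` and a
subgraph on the others. Subgraphs and orientations are the hybrids for `∅` and for `E`, so it
suffices to orient one pair `r, drev r` at a time by a bijection preserving the optimal flow `A`.

Write `P` for a hybrid with that pair removed and `B = P + r + drev r`. The flow `A B` never uses
both directions (cancelling a two-cycle lowers the cost), so it avoids `drev x` for some
`x ∈ {r, drev r}`. Match `B ↦ P + x` and `P ↦ P + drev x`. The first preserves `A` since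
`A B ⊆ P + x`. For the second: if `A B` avoids `x` as well, all four sets share the optimal flow
`A B`; otherwise `A (P + x) = A B` uses `x`, so `A (P + drev x)` cannot use `drev x` (averaging the
two flows and cancelling the two-cycle would give a cheaper flow on `P`), hence equals `A P`.
-/

section PairOperations

variable {V : Type*} {D : Finset (V × V)} {e r : V × V}

@[simp] lemma drev_drev (e : V × V) : drev (drev e) = e := rfl

lemma drev_ne_self (h : e.1 ≠ e.2) : drev e ≠ e :=
  fun h' => h (congrArg Prod.fst h').symm

lemma drev_eq_iff : drev e = r ↔ e = drev r := by
  constructor <;> rintro rfl <;> rfl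

variable [DecidableEq V]

@[simp] lemma mem_padd : e ∈ padd D r ↔ e ∈ D ∨ e = r ∨ e = drev r := by
  simp only [padd, mem_union, mem_insert, mem_singleton]

@[simp] lemma mem_psub : e ∈ psub D r ↔ e ∈ D ∧ e ≠ r ∧ e ≠ drev r := by
  simp [psub]

lemma padd_drev : padd D (drev r) = padd D r := by
  ext; simp only [mem_padd, drev_drev]; tauto

lemma padd_eq_of_eq_or {x : V × V} (hx : x = r ∨ x = drev r) : padd D x = padd D r := by
  rcases hx with rfl | rfl
  exacts [rfl, padd_drev]

lemma padd_subset {E : Finset (V × V)} (hD : D ⊆ E) (hr : r ∈ E) (hr' : drev r ∈ E) :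
    padd D r ⊆ E :=
  union_subset hD (insert_subset hr (singleton_subset_iff.2 hr'))

lemma padd_psub : padd (psub D r) r = padd D r := by
  ext e; simp only [mem_padd, mem_psub]; tauto

lemma padd_padd : padd (padd D r) r = padd D r := by
  ext e; simp only [mem_padd]; tauto

lemma psub_padd : psub (padd D r) r = psub D r := by
  ext e; simp only [mem_padd, mem_psub]; tauto

lemma psub_psub : psub (psub D r) r = psub D r := by
  ext e; simp only [mem_psub]; tauto

lemma psub_insert (he : e = r ∨ e = drev r) : psub (insert e D) r = psub D r := by
  ext f; simp only [mem_psub, mem_insert]; aesop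

lemma padd_insert (he : e = r ∨ e = drev r) : padd (insert e D) r = padd D r := by
  rw [← padd_psub, psub_insert he, padd_psub]

lemma padd_eq_self (hr : r ∈ D) (hr' : drev r ∈ D) : padd D r = D := by
  ext e; simp only [mem_padd]; aesop

lemma psub_eq_self (hr : r ∉ D) (hr' : drev r ∉ D) : psub D r = D := by
  ext e; simp only [mem_psub]; aesop

lemma insert_psub (he : e = r ∨ e = drev r) (heD : e ∈ D) (heD' : drev e ∉ D) :
    insert e (psub D r) = D := by
  ext f
  simp only [mem_insert, mem_psub]
  constructor
  · rintro (rfl | ⟨hf, -, -⟩) <;> assumption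
  · intro hf
    by_cases hfe : f = e
    · exact Or.inl hfe
    · refine Or.inr ⟨hf, fun hfr => ?_, fun hfr => ?_⟩ <;> subst hfr <;>
        rcases he with rfl | rfl <;> simp_all

end PairOperations

section Flows

variable {V : Type*} {E D D' : Finset (V × V)} {d : V → ℤ} {w f g : V × V → ℝ}

lemma flowCost_add : flowCost E w (f + g) = flowCost E w f + flowCost E w g := by
  simp only [flowCost, Pi.add_apply, mul_add, sum_add_distrib]

lemma flowCost_sub : flowCost E w (f - g) = flowCost E w f - flowCost E w g := by
  simp only [flowCost, Pi.sub_apply, mul_sub, sum_sub_distrib]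

lemma flowCost_smul (c : ℝ) : flowCost E w (c • f) = c * flowCost E w f := by
  rw [flowCost, flowCost, mul_sum]
  exact sum_congr rfl fun _ _ => by simp only [Pi.smul_apply, smul_eq_mul]; ring

variable [DecidableEq V]

lemma flowCost_ind_pair {x : V × V} (hx : x ∈ E) (hx' : drev x ∈ E) (hne : x ≠ drev x) :
    flowCost E w (ind {x, drev x}) = w x + w (drev x) := by
  have hsub : ({x, drev x} : Finset (V × V)) ⊆ E := insert_subset hx (singleton_subset_iff.2 hx')
  simp only [flowCost, ind, mul_ite, mul_one, mul_zero]
  rw [sum_ite_mem, inter_eq_right.2 hsub, sum_pair hne]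

lemma ind_injective : Function.Injective (ind (V := V)) := by
  intro S T h
  ext e
  have := congrFun h e
  by_cases hS : e ∈ S <;> by_cases hT : e ∈ T <;> simp [ind, hS, hT] at this ⊢

variable [Fintype V]

def netOutflow (E : Finset (V × V)) (f : V × V → ℝ) (u : V) : ℝ :=
  (∑ v ∈ univ.filter (fun v => (u, v) ∈ E), f (u, v)) -
    ∑ v ∈ univ.filter (fun v => (v, u) ∈ E), f (v, u)

lemma netOutflow_add (u : V) : netOutflow E (f + g) u = netOutflow E f u + netOutflow E g u := by
  simp only [netOutflow, Pi.add_apply, sum_add_distrib]; ring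

lemma netOutflow_sub (u : V) : netOutflow E (f - g) u = netOutflow E f u - netOutflow E g u := by
  simp only [netOutflow, Pi.sub_apply, sum_sub_distrib]; ring

lemma netOutflow_smul (c : ℝ) (u : V) : netOutflow E (c • f) u = c * netOutflow E f u := by
  simp only [netOutflow, Pi.smul_apply, smul_eq_mul, ← mul_sum]; ring

lemma netOutflow_eq_zero (hE : ∀ e, e ∈ E ↔ drev e ∈ E) (hf : ∀ e, f (drev e) = f e) (u : V) :
    netOutflow E f u = 0 := by
  rw [netOutflow, sub_eq_zero]
  exact sum_congr (filter_congr fun v _ => hE (u, v)) fun v _ => (hf (u, v)).symm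

lemma IsFlow.netOutflow_eq (hf : IsFlow E D d f) (u : V) : netOutflow E f u = d u :=
  hf.2.2 u

lemma IsFlow.restrict (hf : IsFlow E D d f) (h : ∀ e, e ∉ D' → f e = 0) : IsFlow E D' d f :=
  ⟨hf.1, h, hf.2.2⟩

lemma IsFlow.mono (hf : IsFlow E D d f) (h : D ⊆ D') : IsFlow E D' d f :=
  hf.restrict fun e he => hf.2.1 e fun he' => he (h he')

lemma AdmitsFlow.mono (h : AdmitsFlow E D d) (hD : D ⊆ D') : AdmitsFlow E D' d :=
  let ⟨f, hf⟩ := h; ⟨f, hf.mono hD⟩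

lemma IsFlow.midpoint (hf : IsFlow E D d f) (hg : IsFlow E D' d g) :
    IsFlow E (D ∪ D') d ((1 / 2 : ℝ) • (f + g)) := by
  refine ⟨fun e he => ?_, fun e he => ?_, fun u => ?_⟩
  · have := hf.1 e he; have := hg.1 e he
    simp only [Pi.smul_apply, Pi.add_apply, smul_eq_mul]
    constructor <;> linarith
  · rw [mem_union, not_or] at he
    simp [hf.2.1 e he.1, hg.2.1 e he.2]
  · change netOutflow E _ u = d u
    rw [netOutflow_smul, netOutflow_add, hf.netOutflow_eq, hg.netOutflow_eq]; ring

lemma IsFlow.sub_twoCycle (hE : ∀ e, e ∈ E ↔ drev e ∈ E) (hf : IsFlow E D d f) {x : V × V}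
    {t : ℝ} (ht : 0 ≤ t) (hx : t ≤ f x) (hx' : t ≤ f (drev x)) :
    IsFlow E D d (f - t • ind {x, drev x}) := by
  have hval : ∀ e, (f - t • ind {x, drev x}) e = if e = x ∨ e = drev x then f e - t else f e := by
    intro e
    by_cases hp : e = x ∨ e = drev x <;> simp [ind, hp]
  have ht_le : ∀ e, e = x ∨ e = drev x → t ≤ f e := by
    rintro e (rfl | rfl) <;> assumption
  refine ⟨fun e he => ?_, fun e he => ?_, fun u => ?_⟩
  · have := hf.1 e he
    rw [hval]
    split_ifs with hp
    · have := ht_le e hp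
      constructor <;> linarith
    · exact this
  · have h0 := hf.2.1 e he
    rw [hval]
    split_ifs with hp
    · linarith [ht_le e hp]
    · exact h0
  · change netOutflow E _ u = d u
    have hsymm : ∀ e, ind {x, drev x} (drev e) = ind {x, drev x} e := by
      intro e
      simp only [ind, mem_insert, mem_singleton, drev_eq_iff, drev_drev, or_comm]
    rw [netOutflow_sub, netOutflow_smul, netOutflow_eq_zero hE hsymm, hf.netOutflow_eq]; ring

end Flows

namespace GoodA

variable {V : Type*} [Fintype V] [DecidableEq V] {E D D₀ P : Finset (V × V)} {d : V → ℤ}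
  {w g : V × V → ℝ} {A : Finset (V × V) → Finset (V × V)} {x : V × V}

lemma isFlow (hA : GoodA E d w A) (hD : D ⊆ E) (h : AdmitsFlow E D d) :
    IsFlow E D d (ind (A D)) :=
  (hA D hD h).1.1

lemma cost_le (hA : GoodA E d w A) (hD : D ⊆ E) (h : AdmitsFlow E D d) (hg : IsFlow E D d g) :
    flowCost E w (ind (A D)) ≤ flowCost E w g :=
  (hA D hD h).1.2 g hg

lemma subset (hA : GoodA E d w A) (hD : D ⊆ E) (h : AdmitsFlow E D d) : A D ⊆ D := by
  intro e he
  by_contra heD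
  simpa [ind, he] using (hA.isFlow hD h).2.1 e heD

lemma eq_of_subset (hA : GoodA E d w A) (hD : D ⊆ E) (h : AdmitsFlow E D d) (hD₀ : D₀ ⊆ D)
    (hAD : A D ⊆ D₀) : AdmitsFlow E D₀ d ∧ A D₀ = A D := by
  have hflow : IsFlow E D₀ d (ind (A D)) :=
    (hA.isFlow hD h).restrict fun e he => if_neg fun he' => he (hAD he')
  have hadm : AdmitsFlow E D₀ d := ⟨_, hflow⟩
  refine ⟨hadm, ind_injective ((hA D₀ (hD₀.trans hD) hadm).2 _ ⟨hflow, fun g hg => ?_⟩).symm⟩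
  exact hA.cost_le hD h (hg.mono hD₀)

/-- Otherwise cancelling the two-cycle `x, drev x` would lower the cost. -/
lemma drev_notMem (hA : GoodA E d w A) (hE : ∀ e, e ∈ E ↔ drev e ∈ E)
    (hE_ne : ∀ e ∈ E, e.1 ≠ e.2) (hw : ∀ e ∈ E, 0 < w e) (hD : D ⊆ E) (h : AdmitsFlow E D d)
    (hx : x ∈ A D) : drev x ∉ A D := by
  intro hx'
  have hxE : x ∈ E := hD (hA.subset hD h hx)
  have hxE' : drev x ∈ E := (hE x).1 hxE
  have hflow := (hA.isFlow hD h).sub_twoCycle hE (x := x) zero_le_one (by simp [ind, hx])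
    (by simp [ind, hx'])
  have hcost := hA.cost_le hD h hflow
  rw [flowCost_sub, flowCost_smul, flowCost_ind_pair hxE hxE' (drev_ne_self (hE_ne x hxE)).symm]
    at hcost
  linarith [hw x hxE, hw _ hxE']

/-- Otherwise the average of the two optimal flows, minus the two-cycle `x, drev x`, would be a
flow on `P` cheaper than one of them. -/
lemma drev_notMem_insert (hA : GoodA E d w A) (hE : ∀ e, e ∈ E ↔ drev e ∈ E)
    (hE_ne : ∀ e ∈ E, e.1 ≠ e.2) (hw : ∀ e ∈ E, 0 < w e) (hxE : x ∈ E) (hP : P ⊆ E)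
    (hX : AdmitsFlow E (insert x P) d) (hY : AdmitsFlow E (insert (drev x) P) d)
    (hxX : x ∈ A (insert x P)) : drev x ∉ A (insert (drev x) P) := by
  intro hxY
  have hxE' : drev x ∈ E := (hE x).1 hxE
  have hXE : insert x P ⊆ E := insert_subset hxE hP
  have hYE : insert (drev x) P ⊆ E := insert_subset hxE' hP
  have hX' : drev x ∉ A (insert x P) := hA.drev_notMem hE hE_ne hw hXE hX hxX
  have hY' : x ∉ A (insert (drev x) P) := hA.drev_notMem hE hE_ne hw hYE hY hxY
  set g := (1 / 2 : ℝ) • (ind (A (insert x P)) + ind (A (insert (drev x) P))) -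
    (1 / 2 : ℝ) • ind {x, drev x} with hg
  have hgx : ∀ e, e = x ∨ e = drev x → g e = 0 := by
    rintro e (rfl | rfl) <;> simp [hg, ind, hxX, hxY, hX', hY']
  have hflow : IsFlow E (insert x P ∪ insert (drev x) P) d g :=
    ((hA.isFlow hXE hX).midpoint (hA.isFlow hYE hY)).sub_twoCycle hE (by norm_num)
      (by simp [ind, hxX, hY']) (by simp [ind, hX', hxY])
  replace hflow : IsFlow E P d g := by
    refine hflow.restrict fun e he => ?_
    by_cases hpair : e = x ∨ e = drev x
    · exact hgx e hpair
    · exact hflow.2.1 e (by simp only [mem_union, mem_insert]; tauto)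
  have hcost : flowCost E w g = (flowCost E w (ind (A (insert x P))) +
      flowCost E w (ind (A (insert (drev x) P))) - (w x + w (drev x))) / 2 := by
    rw [hg, flowCost_sub, flowCost_smul, flowCost_smul, flowCost_add,
      flowCost_ind_pair hxE hxE' (drev_ne_self (hE_ne x hxE)).symm]
    ring
  have h1 := hA.cost_le hXE hX (hflow.mono (subset_insert _ _))
  have h2 := hA.cost_le hYE hY (hflow.mono (subset_insert _ _))
  linarith [hw x hxE, hw _ hxE']

lemma insert_eq_padd (hA : GoodA E d w A) (hB : padd P x ⊆ E) (h : AdmitsFlow E (padd P x) d)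
    (hx : drev x ∉ A (padd P x)) : AdmitsFlow E (insert x P) d ∧ A (insert x P) = A (padd P x) := by
  refine hA.eq_of_subset hB h (fun e he => ?_) (fun e he => ?_)
  · rw [mem_insert] at he; rw [mem_padd]; tauto
  · have heB := hA.subset hB h he
    rw [mem_padd] at heB
    rw [mem_insert]
    rcases heB with heP | rfl | rfl
    exacts [Or.inr heP, Or.inl rfl, absurd he hx]

lemma eq_insert_drev (hA : GoodA E d w A) (hE : ∀ e, e ∈ E ↔ drev e ∈ E)
    (hE_ne : ∀ e ∈ E, e.1 ≠ e.2) (hw : ∀ e ∈ E, 0 < w e) (hB : padd P x ⊆ E)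
    (hY : AdmitsFlow E (insert (drev x) P) d) (hx : drev x ∉ A (padd P x)) :
    AdmitsFlow E P d ∧ A P = A (insert (drev x) P) := by
  have hxE : x ∈ E := hB (by simp)
  have hPE : P ⊆ E := fun e he => hB (by simp [he])
  have hYE : insert (drev x) P ⊆ E := insert_subset ((hE x).1 hxE) hPE
  have hYB : insert (drev x) P ⊆ padd P x := fun e he => by
    rw [mem_insert] at he; rw [mem_padd]; tauto
  have hB' : AdmitsFlow E (padd P x) d := hY.mono hYB
  by_cases hxB : x ∈ A (padd P x)
  · obtain ⟨hX, hXB⟩ := hA.insert_eq_padd hB hB' hx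
    have hxY := hA.drev_notMem_insert hE hE_ne hw hxE hPE hX hY (hXB ▸ hxB)
    refine hA.eq_of_subset hYE hY (subset_insert _ _) fun e he => ?_
    exact (mem_insert.1 (hA.subset hYE hY he)).resolve_left fun h => hxY (h ▸ he)
  · have hAP : A (padd P x) ⊆ P := fun e he => by
      have heB := hA.subset hB hB' he
      rw [mem_padd] at heB
      rcases heB with heP | rfl | rfl
      exacts [heP, absurd he hxB, absurd he hx]
    obtain ⟨hP, hPB⟩ := hA.eq_of_subset hB hB' (fun e he => by simp [he]) hAP
    obtain ⟨-, hYB'⟩ := hA.eq_of_subset hB hB' hYB (hAP.trans (subset_insert _ _))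
    exact ⟨hP, hPB.trans hYB'.symm⟩

end GoodA

section Hybrid

variable {V : Type*} [DecidableEq V] {E S D : Finset (V × V)} {r : V × V}

/-- `D` is unoriented (contains both directions or neither) exactly at the edges outside `S`:
a subgraph for `S = ∅`, an orientation for `S = E`. -/
def IsHybrid (E S D : Finset (V × V)) : Prop :=
  D ⊆ E ∧ ∀ e ∈ E, ((e ∈ D ↔ drev e ∈ D) ↔ e ∉ S)

lemma isHybrid_empty_iff : IsHybrid E ∅ D ↔ IsSubgraph E D := by
  simp [IsHybrid, IsSubgraph]

lemma isHybrid_self_iff : IsHybrid E E D ↔ IsOrientation E D := by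
  refine and_congr_right fun _ => forall₂_congr fun e he => ?_
  simp only [he, not_true_eq_false, iff_false]
  tauto

lemma isHybrid_iff_psub_and {S₀ : Finset (V × V)} (hr : r ∈ E) (hr' : drev r ∈ E)
    (hS : ∀ e, e ≠ r → e ≠ drev r → (e ∈ S ↔ e ∈ S₀)) (hrS₀ : r ∉ S₀) (hrS₀' : drev r ∉ S₀) :
    IsHybrid E S D ↔ IsHybrid E S₀ (psub D r) ∧ ((r ∈ D ↔ drev r ∈ D) ↔ r ∉ S) ∧
      ((drev r ∈ D ↔ r ∈ D) ↔ drev r ∉ S) := by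
  have hoff : ∀ e, e ≠ r → e ≠ drev r →
      ((e ∈ psub D r ↔ drev e ∈ psub D r) ↔ (e ∈ D ↔ drev e ∈ D)) := by
    intro e h1 h2
    simp [h1, h2, drev_eq_iff]
  constructor
  · rintro ⟨hDE, h⟩
    refine ⟨⟨fun e he => hDE (mem_psub.1 he).1, fun e he => ?_⟩, h r hr,
      by simpa only [drev_drev] using h _ hr'⟩
    by_cases hp : e = r ∨ e = drev r
    · rcases hp with rfl | rfl <;> simp [hrS₀, hrS₀']
    · rw [not_or] at hp
      rw [hoff e hp.1 hp.2, h e he, hS e hp.1 hp.2]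
  · rintro ⟨⟨hPE, h⟩, h1, h2⟩
    refine ⟨fun e he => ?_, fun e he => ?_⟩
    · by_cases hp : e = r ∨ e = drev r
      · rcases hp with rfl | rfl <;> assumption
      · rw [not_or] at hp
        exact hPE (mem_psub.2 ⟨he, hp⟩)
    · by_cases hp : e = r ∨ e = drev r
      · rcases hp with rfl | rfl
        exacts [h1, by simpa only [drev_drev] using h2]
      · rw [not_or] at hp
        rw [← hoff e hp.1 hp.2, h e he, hS e hp.1 hp.2]

lemma isHybrid_iff_psub (hr : r ∈ E) (hr' : drev r ∈ E) (hrS : r ∉ S) (hrS' : drev r ∉ S) :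
    IsHybrid E S D ↔ IsHybrid E S (psub D r) ∧ (r ∈ D ↔ drev r ∈ D) := by
  rw [isHybrid_iff_psub_and hr hr' (fun _ _ _ => Iff.rfl) hrS hrS']
  simp only [hrS, hrS', not_false_eq_true, iff_true]
  exact and_congr_right fun _ => ⟨fun h => h.1, fun h => ⟨h, h.symm⟩⟩

lemma isHybrid_padd_iff (hr : r ∈ E) (hr' : drev r ∈ E) (hrS : r ∉ S) (hrS' : drev r ∉ S) :
    IsHybrid E (padd S r) D ↔ IsHybrid E S (psub D r) ∧ (r ∈ D ↔ drev r ∉ D) := by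
  rw [isHybrid_iff_psub_and hr hr' (fun e h1 h2 => by simp [h1, h2]) hrS hrS']
  simp only [mem_padd, true_or, or_true, not_true_eq_false, iff_false]
  exact and_congr_right fun _ => ⟨fun h => by tauto, fun h => by tauto⟩

end Hybrid

section Step

variable {V : Type*} [DecidableEq V] {E S D : Finset (V × V)} {r : V × V}
  {A : Finset (V × V) → Finset (V × V)}

/-- Chosen so that the optimal flow on `padd D r` avoids `drev (pivot A r D)`. -/
def pivot (A : Finset (V × V) → Finset (V × V)) (r : V × V) (D : Finset (V × V)) : V × V :=
  if drev r ∈ A (padd D r) then drev r else r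

def orientPair (A : Finset (V × V) → Finset (V × V)) (r : V × V) (D : Finset (V × V)) :
    Finset (V × V) :=
  insert (if pivot A r D ∈ D then pivot A r D else drev (pivot A r D)) (psub D r)

def unorientPair (A : Finset (V × V) → Finset (V × V)) (r : V × V) (D : Finset (V × V)) :
    Finset (V × V) :=
  if pivot A r D ∈ D then padd D r else psub D r

lemma pivot_eq_or : pivot A r D = r ∨ pivot A r D = drev r := by
  unfold pivot; split_ifs <;> simp

lemma pivot_congr {D' : Finset (V × V)} (h : padd D r = padd D' r) :
    pivot A r D = pivot A r D' := by
  simp only [pivot, h]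

lemma orientPair_edge_eq_or :
    (if pivot A r D ∈ D then pivot A r D else drev (pivot A r D)) = r ∨
      (if pivot A r D ∈ D then pivot A r D else drev (pivot A r D)) = drev r := by
  rcases pivot_eq_or (A := A) (r := r) (D := D) with h | h <;> split_ifs <;> simp [h]

lemma padd_orientPair : padd (orientPair A r D) r = padd D r := by
  rw [orientPair, padd_insert orientPair_edge_eq_or, padd_psub]

lemma psub_orientPair : psub (orientPair A r D) r = psub D r := by
  rw [orientPair, psub_insert orientPair_edge_eq_or, psub_psub]

lemma padd_unorientPair : padd (unorientPair A r D) r = padd D r := by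
  unfold unorientPair; split_ifs
  exacts [padd_padd, padd_psub]

lemma psub_unorientPair : psub (unorientPair A r D) r = psub D r := by
  unfold unorientPair; split_ifs
  exacts [psub_padd, psub_psub]

lemma unorientPair_orientPair (hne : r ≠ drev r) (hD : r ∈ D ↔ drev r ∈ D) :
    unorientPair A r (orientPair A r D) = D := by
  rw [unorientPair, pivot_congr padd_orientPair, padd_orientPair, psub_orientPair]
  have hstate : (r ∈ D ∧ drev r ∈ D) ∨ (r ∉ D ∧ drev r ∉ D) := by tauto
  rcases hstate with ⟨h1, h2⟩ | ⟨h1, h2⟩ <;>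
    rcases pivot_eq_or (A := A) (r := r) (D := D) with h | h <;>
    simp [orientPair, h, h1, h2, hne, hne.symm, padd_eq_self, psub_eq_self]

lemma orientPair_unorientPair (hD : r ∈ D ↔ drev r ∉ D) :
    orientPair A r (unorientPair A r D) = D := by
  rw [orientPair, pivot_congr padd_unorientPair, psub_unorientPair]
  have hstate : (r ∈ D ∧ drev r ∉ D) ∨ (r ∉ D ∧ drev r ∈ D) := by tauto
  rcases hstate with ⟨h1, h2⟩ | ⟨h1, h2⟩ <;>
    rcases pivot_eq_or (A := A) (r := r) (D := D) with h | h <;>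
    simp [unorientPair, h, h1, h2, insert_psub]

lemma isHybrid_orientPair (hr : r ∈ E) (hr' : drev r ∈ E) (hne : r ≠ drev r) (hrS : r ∉ S)
    (hrS' : drev r ∉ S) (hD : IsHybrid E S D) : IsHybrid E (padd S r) (orientPair A r D) := by
  rw [isHybrid_padd_iff hr hr' hrS hrS', psub_orientPair]
  refine ⟨((isHybrid_iff_psub hr hr' hrS hrS').1 hD).1, ?_⟩
  rcases orientPair_edge_eq_or (A := A) (r := r) (D := D) with h | h <;>
    simp [orientPair, h, hne, hne.symm]

lemma isHybrid_unorientPair (hr : r ∈ E) (hr' : drev r ∈ E) (hrS : r ∉ S)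
    (hrS' : drev r ∉ S) (hD : IsHybrid E (padd S r) D) : IsHybrid E S (unorientPair A r D) := by
  rw [isHybrid_iff_psub hr hr' hrS hrS', psub_unorientPair]
  refine ⟨((isHybrid_padd_iff hr hr' hrS hrS').1 hD).1, ?_⟩
  unfold unorientPair; split_ifs <;> simp

end Step

namespace GoodA

variable {V : Type*} [Fintype V] [DecidableEq V] {E S D : Finset (V × V)} {d : V → ℤ}
  {w : V × V → ℝ} {A : Finset (V × V) → Finset (V × V)} {r : V × V}

lemma drev_pivot_notMem (hA : GoodA E d w A) (hE : ∀ e, e ∈ E ↔ drev e ∈ E)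
    (hE_ne : ∀ e ∈ E, e.1 ≠ e.2) (hw : ∀ e ∈ E, 0 < w e) (hB : padd D r ⊆ E)
    (h : AdmitsFlow E (padd D r) d) : drev (pivot A r D) ∉ A (padd D r) := by
  unfold pivot
  split_ifs with hr
  · simpa using hA.drev_notMem hE hE_ne hw hB h hr
  · exact hr

lemma orientPair_preserves_minCostFlow (hA : GoodA E d w A) (hE : ∀ e, e ∈ E ↔ drev e ∈ E)
    (hE_ne : ∀ e ∈ E, e.1 ≠ e.2) (hw : ∀ e ∈ E, 0 < w e) (hr : r ∈ E) (hDE : D ⊆ E)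
    (hD : r ∈ D ↔ drev r ∈ D) (h : AdmitsFlow E D d) :
    AdmitsFlow E (orientPair A r D) d ∧ A (orientPair A r D) = A D := by
  obtain ⟨x, hx_def⟩ : ∃ x, pivot A r D = x := ⟨_, rfl⟩
  have hx : x = r ∨ x = drev r := hx_def ▸ pivot_eq_or
  have hxD : x ∈ D ↔ r ∈ D := by rcases hx with rfl | rfl; exacts [Iff.rfl, hD.symm]
  have hBE : padd D r ⊆ E := padd_subset hDE hr ((hE r).1 hr)
  have hB : padd (psub D r) x = padd D r := (padd_eq_of_eq_or hx).trans padd_psub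
  have hxB : drev x ∉ A (padd (psub D r) x) := by
    rw [hB, ← hx_def]
    exact hA.drev_pivot_notMem hE hE_ne hw hBE (h.mono fun e he => by simp [he])
  by_cases hrD : r ∈ D
  · have hDB : padd D r = D := padd_eq_self hrD (hD.1 hrD)
    rw [orientPair, hx_def, if_pos (hxD.2 hrD)]
    obtain ⟨h1, h2⟩ := hA.insert_eq_padd (hB ▸ hBE) (by rwa [hB, hDB]) hxB
    exact ⟨h1, by rw [h2, hB, hDB]⟩
  · have hDP : psub D r = D := psub_eq_self hrD (mt hD.2 hrD)
    rw [orientPair, hx_def, if_neg (mt hxD.1 hrD)]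
    have hY : AdmitsFlow E (insert (drev x) (psub D r)) d := h.mono (by simp [hDP])
    exact ⟨hY, (hA.eq_insert_drev hE hE_ne hw (hB ▸ hBE) hY hxB).2.symm.trans (by rw [hDP])⟩

lemma admitsFlow_unorientPair (hA : GoodA E d w A) (hE : ∀ e, e ∈ E ↔ drev e ∈ E)
    (hE_ne : ∀ e ∈ E, e.1 ≠ e.2) (hw : ∀ e ∈ E, 0 < w e) (hr : r ∈ E) (hDE : D ⊆ E)
    (hD : r ∈ D ↔ drev r ∉ D) (h : AdmitsFlow E D d) : AdmitsFlow E (unorientPair A r D) d := by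
  obtain ⟨x, hx_def⟩ : ∃ x, pivot A r D = x := ⟨_, rfl⟩
  have hx : x = r ∨ x = drev r := hx_def ▸ pivot_eq_or
  have hBE : padd D r ⊆ E := padd_subset hDE hr ((hE r).1 hr)
  have hB' : AdmitsFlow E (padd D r) d := h.mono fun e he => by simp [he]
  rw [unorientPair, hx_def]
  split_ifs with hxD
  · exact hB'
  · have hB : padd (psub D r) x = padd D r := (padd_eq_of_eq_or hx).trans padd_psub
    have hxD' : drev x ∈ D := by
      rcases hx with rfl | rfl
      exacts [not_not.1 (mt hD.2 hxD), hD.2 hxD]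
    have hxB : drev x ∉ A (padd (psub D r) x) := by
      rw [hB, ← hx_def]
      exact hA.drev_pivot_notMem hE hE_ne hw hBE hB'
    have hD' : insert (drev x) (psub D r) = D :=
      insert_psub (by rcases hx with rfl | rfl <;> simp) hxD' (by simpa using hxD)
    exact (hA.eq_insert_drev hE hE_ne hw (hB ▸ hBE) (by rwa [hD']) hxB).1

theorem exists_equiv_isHybrid_padd (hA : GoodA E d w A) (hE : ∀ e, e ∈ E ↔ drev e ∈ E)
    (hE_ne : ∀ e ∈ E, e.1 ≠ e.2) (hw : ∀ e ∈ E, 0 < w e) (hr : r ∈ E) (hrS : r ∉ S)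
    (hrS' : drev r ∉ S) :
    ∃ φ : {D // IsHybrid E S D ∧ AdmitsFlow E D d} ≃
        {D // IsHybrid E (padd S r) D ∧ AdmitsFlow E D d},
      ∀ D, A (φ D).1 = A D.1 := by
  have hr' : drev r ∈ E := (hE r).1 hr
  have hne : r ≠ drev r := (drev_ne_self (hE_ne r hr)).symm
  have hunoriented {D} (hD : IsHybrid E S D) : r ∈ D ↔ drev r ∈ D :=
    ((isHybrid_iff_psub hr hr' hrS hrS').1 hD).2
  have horiented {D} (hD : IsHybrid E (padd S r) D) : r ∈ D ↔ drev r ∉ D :=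
    ((isHybrid_padd_iff hr hr' hrS hrS').1 hD).2
  have hpreserves (D : {D // IsHybrid E S D ∧ AdmitsFlow E D d}) :=
    hA.orientPair_preserves_minCostFlow hE hE_ne hw hr D.2.1.1 (hunoriented D.2.1) D.2.2
  refine ⟨⟨fun D => ⟨orientPair A r D, isHybrid_orientPair hr hr' hne hrS hrS' D.2.1,
      (hpreserves D).1⟩,
    fun D => ⟨unorientPair A r D, isHybrid_unorientPair hr hr' hrS hrS' D.2.1,
      hA.admitsFlow_unorientPair hE hE_ne hw hr D.2.1.1 (horiented D.2.1) D.2.2⟩,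
    fun D => Subtype.ext (unorientPair_orientPair hne (hunoriented D.2.1)),
    fun D => Subtype.ext (orientPair_unorientPair (horiented D.2.1))⟩, fun D => (hpreserves D).2⟩

theorem exists_equiv_isHybrid (hA : GoodA E d w A) (hE : ∀ e, e ∈ E ↔ drev e ∈ E)
    (hE_ne : ∀ e ∈ E, e.1 ≠ e.2) (hw : ∀ e ∈ E, 0 < w e) (hSE : S ⊆ E)
    (hS : ∀ e ∈ S, drev e ∈ S) :
    ∃ φ : {D // IsHybrid E ∅ D ∧ AdmitsFlow E D d} ≃ {D // IsHybrid E S D ∧ AdmitsFlow E D d},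
      ∀ D, A (φ D).1 = A D.1 := by
  induction S using Finset.strongInduction with
  | H S ih =>
  rcases S.eq_empty_or_nonempty with rfl | ⟨r, hr⟩
  · exact ⟨Equiv.refl _, fun _ => rfl⟩
  have hr' := hS r hr
  have hlt : psub S r ⊂ S := (ssubset_iff_of_subset sdiff_subset).2 ⟨r, hr, by simp⟩
  obtain ⟨φ, hφ⟩ := ih _ hlt (sdiff_subset.trans hSE) fun e he => by
    simp only [mem_psub, ne_eq, drev_eq_iff] at he ⊢
    exact ⟨hS e he.1, he.2.2, he.2.1⟩
  obtain ⟨ψ, hψ⟩ := hA.exists_equiv_isHybrid_padd hE hE_ne hw (hSE hr) (S := psub S r)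
    (by simp) (by simp)
  have hSr : padd (psub S r) r = S := padd_psub.trans (padd_eq_self hr hr')
  exact ⟨(φ.trans ψ).trans (Equiv.subtypeEquivRight fun D => by rw [hSr]),
    fun D => (hψ _).trans (hφ D)⟩

end GoodA

theorem subgraph_orientation_bijection_preserving_min_cost_flow_general
    {V : Type*} [Fintype V] [DecidableEq V]
    (E : Finset (V × V)) (hE_symm : ∀ e, e ∈ E ↔ drev e ∈ E)
    (hE_ne : ∀ e ∈ E, e.1 ≠ e.2)
    (d : V → ℤ)
    (w : V × V → ℝ) (hw : ∀ e ∈ E, 0 < w e)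
    (A : Finset (V × V) → Finset (V × V)) (hA : GoodA E d w A) :
    ∃ φ : {K : Finset (V × V) // IsSubgraph E K ∧ AdmitsFlow E K d} ≃
          {L : Finset (V × V) // IsOrientation E L ∧ AdmitsFlow E L d},
      ∀ K, A (φ K).1 = A K.1 := by
  obtain ⟨φ, hφ⟩ := hA.exists_equiv_isHybrid hE_symm hE_ne hw subset_rfl
    fun e he => (hE_symm e).1 he
  exact ⟨((Equiv.subtypeEquivRight fun K => by rw [isHybrid_empty_iff]).trans φ).trans
    (Equiv.subtypeEquivRight fun L => by rw [isHybrid_self_iff]), fun K => hφ _⟩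

theorem subgraph_orientation_bijection_preserving_min_cost_flow
    {V : Type*} [Fintype V] [DecidableEq V]
    (E : Finset (V × V)) (hE_symm : ∀ e, e ∈ E ↔ drev e ∈ E)
    (hE_ne : ∀ e ∈ E, e.1 ≠ e.2)
    (d : V → ℤ) (hd : ∑ u : V, d u = 0)
    (w : V × V → ℝ) (hw : ∀ e ∈ E, 0 < w e)
    (A : Finset (V × V) → Finset (V × V)) (hA : GoodA E d w A) :
    ∃ φ : {K : Finset (V × V) // IsSubgraph E K ∧ AdmitsFlow E K d} ≃
          {L : Finset (V × V) // IsOrientation E L ∧ AdmitsFlow E L d},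
      ∀ K, A (φ K).1 = A K.1 :=
  subgraph_orientation_bijection_preserving_min_cost_flow_general E hE_symm hE_ne d w hw A hA
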